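/- arXiv:2405.13763 — 6 statements merged into one kernel-verified Lean document; each statement's English description precedes it below -/
import Mathlib

section
/- For every integer n ≥ 1 and all real numbers α, β with 0 ≤ β < α ≤ 1, the square root factorization holds: C_{α,β} · C_{α,β} = A_{α,β}. -/
/-!
The generating function `R = ∑ rₘ Xᵐ` of `rₘ = C(2m,m)/4ᵐ` is `(1 - 4X)^(-1/2)` in disguise:
the recursion `2(m+1) r_{m+1} = (2m+1) rₘ` says `2(1 - X) R' = R`, so `(1 - X) R²` has zero
derivative and `R² = 1/(1 - X)`. Hence `∑ cₘ Xᵐ = R(αX) R(βX)` squares to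
`1/((1 - αX)(1 - βX)) = ∑ aₘ Xᵐ`, and lower triangular Toeplitz matrices multiply like the
(truncated) power series of their entries.
-/

open Finset Matrix

/-- `r_m = (1/4^m)·C(2m,m)`. -/
noncomputable def rCoef (m : ℕ) : ℝ := (1 / 4 ^ m) * (Nat.choose (2 * m) m : ℝ)

/-- `a_m = Σ_{t=0}^{m} α^t β^{m−t}`. -/
noncomputable def aCoef (α β : ℝ) (m : ℕ) : ℝ :=
  ∑ t ∈ Finset.range (m + 1), α ^ t * β ^ (m - t)

/-- `c_m = Σ_{i=0}^{m} α^{m−i} r_{m−i} r_i β^i`. -/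
noncomputable def cCoef (α β : ℝ) (m : ℕ) : ℝ :=
  ∑ i ∈ Finset.range (m + 1), α ^ (m - i) * rCoef (m - i) * rCoef i * β ^ i

/-- The SGD workload matrix `A_{α,β}`. -/
noncomputable def Amat (n : ℕ) (α β : ℝ) : Matrix (Fin n) (Fin n) ℝ :=
  Matrix.of fun i j => if (j : ℕ) ≤ (i : ℕ) then aCoef α β ((i : ℕ) - (j : ℕ)) else 0

/-- The square root factor `C_{α,β}`, lower triangular Toeplitz with entries `c_{i-j}`. -/
noncomputable def Cmat (n : ℕ) (α β : ℝ) : Matrix (Fin n) (Fin n) ℝ :=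
  Matrix.of fun i j => if (j : ℕ) ≤ (i : ℕ) then cCoef α β ((i : ℕ) - (j : ℕ)) else 0

open PowerSeries

section LowerToeplitz

variable {R : Type*} [Semiring R]

def lowerToeplitz (n : ℕ) (f : ℕ → R) : Matrix (Fin n) (Fin n) R :=
  Matrix.of fun i j => if (j : ℕ) ≤ i then f (i - j) else 0

lemma lowerToeplitz_mul (n : ℕ) (f g : ℕ → R) :
    lowerToeplitz n f * lowerToeplitz n g =
      lowerToeplitz n fun m => ∑ p ∈ antidiagonal m, f p.1 * g p.2 := by
  ext i j
  simp only [lowerToeplitz, mul_apply, of_apply, ite_mul, zero_mul, mul_ite, mul_zero, ← ite_and,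
    ← Finset.sum_filter]
  split_ifs with hji
  · refine Finset.sum_bij (fun k _ => ((i : ℕ) - k, (k : ℕ) - j)) ?_ ?_ ?_ fun _ _ => rfl
    · intro k hk
      simp only [Finset.mem_filter, Finset.mem_univ, true_and] at hk
      simp only [Finset.HasAntidiagonal.mem_antidiagonal]
      omega
    · intro k hk l hl hkl
      simp only [Finset.mem_filter, Finset.mem_univ, true_and, Prod.mk.injEq] at hk hl hkl
      exact Fin.ext (by omega)
    · intro p hp
      rw [Finset.HasAntidiagonal.mem_antidiagonal] at hp
      exact ⟨⟨j + p.2, by omega⟩, by simp only [Finset.mem_filter, Finset.mem_univ, true_and]; omega,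
        Prod.ext (by simp only; omega) (by simp only; omega)⟩
  · refine Finset.sum_eq_zero fun k hk => ?_
    simp only [Finset.mem_filter, Finset.mem_univ, true_and] at hk
    omega

end LowerToeplitz

lemma rCoef_succ (m : ℕ) : 2 * ((m : ℝ) + 1) * rCoef (m + 1) = (2 * m + 1) * rCoef m := by
  have h : ((m + 1 : ℕ) : ℝ) * Nat.centralBinom (m + 1) = 2 * (2 * m + 1) * Nat.centralBinom m :=
    mod_cast Nat.succ_mul_centralBinom_succ m
  simp only [Nat.centralBinom_eq_two_mul_choose, Nat.cast_succ] at h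
  simp only [rCoef, pow_succ]
  field_simp
  linear_combination 2 * h

noncomputable def rSeries : ℝ⟦X⟧ := PowerSeries.mk rCoef

lemma two_mul_one_sub_X_mul_derivative_rSeries : 2 * ((1 - X) * d⁄dX ℝ rSeries) = rSeries := by
  ext m
  rw [← map_ofNat C 2, coeff_C_mul, one_sub_mul, map_sub, coeff_derivative]
  cases m with
  | zero => norm_num [rSeries, rCoef]
  | succ m =>
    rw [coeff_succ_X_mul, coeff_derivative]
    simp only [rSeries, coeff_mk, Nat.cast_succ]
    linear_combination (norm := (push_cast; ring)) rCoef_succ (m + 1)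

lemma one_sub_X_mul_rSeries_sq : (1 - X) * rSeries ^ 2 = 1 := by
  apply derivative.ext
  · rw [Derivation.leibniz, derivative_pow, map_sub, derivative_X, Derivation.map_one_eq_zero,
      smul_eq_mul, smul_eq_mul]
    linear_combination rSeries * two_mul_one_sub_X_mul_derivative_rSeries
  · simp [rSeries, rCoef]

lemma rSeries_sq : rSeries ^ 2 = PowerSeries.mk 1 := by
  calc rSeries ^ 2 = PowerSeries.mk 1 * ((1 - X) * rSeries ^ 2) := by
        rw [← mul_assoc, mk_one_mul_one_sub_eq_one, one_mul]
    _ = PowerSeries.mk 1 := by rw [one_sub_X_mul_rSeries_sq, mul_one]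

lemma mk_cCoef (α β : ℝ) : PowerSeries.mk (cCoef α β) = rescale β rSeries * rescale α rSeries := by
  ext m
  rw [coeff_mul, Finset.Nat.sum_antidiagonal_eq_sum_range_succ_mk]
  simp only [coeff_mk, coeff_rescale, rSeries, cCoef]
  exact Finset.sum_congr rfl fun i _ => by ring

lemma mk_aCoef (α β : ℝ) :
    PowerSeries.mk (aCoef α β) = rescale α (PowerSeries.mk 1) * rescale β (PowerSeries.mk 1) := by
  ext m
  rw [coeff_mul, Finset.Nat.sum_antidiagonal_eq_sum_range_succ_mk]
  simp [aCoef]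

lemma mk_cCoef_sq (α β : ℝ) : PowerSeries.mk (cCoef α β) ^ 2 = PowerSeries.mk (aCoef α β) := by
  rw [mk_cCoef, mk_aCoef, ← rSeries_sq, mul_pow, ← map_pow, ← map_pow, mul_comm]

theorem square_root_factorization_general (n : ℕ) (α β : ℝ) :
    Cmat n α β * Cmat n α β = Amat n α β := by
  have hconv (m : ℕ) : ∑ p ∈ antidiagonal m, cCoef α β p.1 * cCoef α β p.2 = aCoef α β m := by
    simpa only [sq, coeff_mul, coeff_mk] using congrArg (coeff m) (mk_cCoef_sq α β)
  change lowerToeplitz n (cCoef α β) * lowerToeplitz n (cCoef α β) = lowerToeplitz n (aCoef α β)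
  simp only [lowerToeplitz_mul, hconv]

/-- the square root factorization `C_{α,β} · C_{α,β} = A_{α,β}`. -/
theorem square_root_factorization (n : ℕ) (hn : 1 ≤ n) (α β : ℝ)
    (hβ : 0 ≤ β) (hβα : β < α) (hα : α ≤ 1) :
    Cmat n α β * Cmat n α β = Amat n α β :=
  square_root_factorization_general n α β
end

section
/- For all real numbers α, β with 0 ≤ β < α ≤ 1, the sequence c_m = Σ_{i=0}^{m} α^{m−i} r_{m−i} r_i β^i is monotonically non-increasing: c_{m+1} ≤ c_m for every m ≥ 0. -/
open Finset

/-!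
`c_m` is the coefficient of `x^m` in `(1 - αx)^{-1/2} (1 - βx)^{-1/2}`, the Cauchy product of
`a_k = α^k r_k` and `b_k = β^k r_k`. These satisfy `(k + 1) a_{k+1} = α (k + 1/2) a_k`, so Leibniz'
rule gives `(m + 1) c_{m+1} = Σ_{i+j=m} (α (i + 1/2) + β (j + 1/2)) a_i b_j`. For `α, β ∈ [0, 1]`
each weight is at most `i + j + 1 = m + 1`, and the right side is at most `(m + 1) c_m`.
-/

/-- Leibniz' rule for the coefficients of a product of power series. -/
theorem succ_mul_sum_antidiagonal_succ {R : Type*} [CommSemiring R] (a b : ℕ → R) (m : ℕ) :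
    (m + 1 : R) * ∑ p ∈ antidiagonal (m + 1), a p.1 * b p.2 =
      ∑ p ∈ antidiagonal m,
        ((p.1 + 1 : R) * a (p.1 + 1) * b p.2 + a p.1 * ((p.2 + 1 : R) * b (p.2 + 1))) := by
  calc (m + 1 : R) * ∑ p ∈ antidiagonal (m + 1), a p.1 * b p.2
      = ∑ p ∈ antidiagonal (m + 1), ((p.1 : R) * a p.1 * b p.2 + a p.1 * ((p.2 : R) * b p.2)) := by
        rw [mul_sum]
        refine sum_congr rfl fun p hp => ?_
        have hp : (p.1 : R) + p.2 = m + 1 := by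
          simpa using congrArg (Nat.cast : ℕ → R) (mem_antidiagonal.mp hp)
        rw [← hp]
        ring
    _ = _ := by
        rw [sum_add_distrib, Nat.sum_antidiagonal_succ, Nat.sum_antidiagonal_succ']
        simp only [Nat.cast_zero, Nat.cast_add, Nat.cast_one, zero_mul, mul_zero, zero_add,
          ← sum_add_distrib]

lemma rCoef_nonneg (m : ℕ) : 0 ≤ rCoef m := by
  unfold rCoef
  positivity

lemma two_mul_succ_mul_rCoef_succ (k : ℕ) :
    2 * ((k : ℝ) + 1) * rCoef (k + 1) = (2 * k + 1) * rCoef k := by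
  have h : ((k : ℝ) + 1) * ((2 * (k + 1)).choose (k + 1) : ℝ) =
      2 * (2 * k + 1) * ((2 * k).choose k : ℝ) := by
    exact_mod_cast Nat.succ_mul_centralBinom_succ k
  unfold rCoef
  rw [pow_succ]
  field_simp
  linear_combination 2 * h

lemma succ_mul_pow_mul_rCoef_succ (x : ℝ) (k : ℕ) :
    ((k : ℝ) + 1) * (x ^ (k + 1) * rCoef (k + 1)) = x * (k + 1 / 2) * (x ^ k * rCoef k) := by
  linear_combination (x ^ (k + 1) / 2) * two_mul_succ_mul_rCoef_succ k

lemma cCoef_eq_sum_antidiagonal (α β : ℝ) (m : ℕ) :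
    cCoef α β m = ∑ p ∈ antidiagonal m, α ^ p.1 * rCoef p.1 * (β ^ p.2 * rCoef p.2) := by
  rw [← Nat.sum_antidiagonal_swap]
  simp only [Prod.fst_swap, Prod.snd_swap]
  rw [Nat.sum_antidiagonal_eq_sum_range_succ fun i j => α ^ j * rCoef j * (β ^ i * rCoef i)]
  exact sum_congr rfl fun i _ => by ring

theorem cCoef_succ_le {α β : ℝ} (hα₀ : 0 ≤ α) (hα₁ : α ≤ 1) (hβ₀ : 0 ≤ β) (hβ₁ : β ≤ 1)
    (m : ℕ) : cCoef α β (m + 1) ≤ cCoef α β m := by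
  have leibniz : ((m : ℝ) + 1) * cCoef α β (m + 1) = ∑ p ∈ antidiagonal m,
      (α * (p.1 + 1 / 2) + β * (p.2 + 1 / 2)) * (α ^ p.1 * rCoef p.1 * (β ^ p.2 * rCoef p.2)) := by
    rw [cCoef_eq_sum_antidiagonal,
      succ_mul_sum_antidiagonal_succ (fun k => α ^ k * rCoef k) (fun k => β ^ k * rCoef k)]
    refine sum_congr rfl fun p _ => ?_
    rw [succ_mul_pow_mul_rCoef_succ, succ_mul_pow_mul_rCoef_succ]
    ring
  have weights_le : ∑ p ∈ antidiagonal m,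
      (α * (p.1 + 1 / 2) + β * (p.2 + 1 / 2)) * (α ^ p.1 * rCoef p.1 * (β ^ p.2 * rCoef p.2))
        ≤ ((m : ℝ) + 1) * cCoef α β m := by
    rw [cCoef_eq_sum_antidiagonal, mul_sum]
    refine sum_le_sum fun p hp => mul_le_mul_of_nonneg_right ?_ ?_
    · have hp : (p.1 : ℝ) + p.2 = m := by exact_mod_cast mem_antidiagonal.mp hp
      have h₁ : α * (p.1 + 1 / 2) ≤ p.1 + 1 / 2 := mul_le_of_le_one_left (by positivity) hα₁
      have h₂ : β * (p.2 + 1 / 2) ≤ p.2 + 1 / 2 := mul_le_of_le_one_left (by positivity) hβ₁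
      linarith
    · have := rCoef_nonneg p.1
      have := rCoef_nonneg p.2
      positivity
  exact le_of_mul_le_mul_left (leibniz ▸ weights_le) (by positivity)

/-- the sequence `c_m` is monotonically non-increasing. -/
theorem cCoef_antitone (α β : ℝ) (hβ : 0 ≤ β) (hβα : β < α) (hα : α ≤ 1) :
    ∀ m : ℕ, cCoef α β (m + 1) ≤ cCoef α β m :=
  cCoef_succ_le (hβ.trans hβα.le) hα hβ (hβα.le.trans hα)
end

section
/- Let n ≥ 1, b ≥ 1, k ≥ 1 be integers with b dividing n and k ≤ n/b, and let C be any n×n real matrix such that every entry of CᵀC is nonnegative. Then (k/n)·‖C‖_F² ≤ sens_{k,b}(C)² ≤ k·‖C‖_F², where ‖·‖_F is the Frobenius norm. -/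
/-!
Writing `G = CᵀC`, the double sum of `G` over a set `π` is `∑ᵣ (∑_{i ∈ π} C r i)²`, so
Cauchy–Schwarz bounds it by `|π| · ‖C‖_F²`; this is the upper bound. For the lower bound, the `n`
cyclic progressions `a, a + b, …, a + (k - 1) b` (mod `n`) are `b`-separated because `k b ≤ n`,
and together they cover every index exactly `k` times. As `G ≥ 0`, the double sum over each of
them is at least its diagonal part, and these diagonal parts add up to `k · tr G = k · ‖C‖_F²`.
-/

open Finset Matrix

/-- The `b`-min-separated `L2`-sensitivity with at most `k` participations:
`sens_{k,b}(C) = max_{π ∈ Π_{k,b}} sqrt(Σ_{i,j∈π} (CᵀC)[i,j])`. -/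
noncomputable def sens (n b k : ℕ) (C : Matrix (Fin n) (Fin n) ℝ) : ℝ :=
  Real.sqrt (sSup { x : ℝ | ∃ π : Finset (Fin n), π.card ≤ k ∧
    (∀ i ∈ π, ∀ j ∈ π, i ≠ j → b ≤ Nat.dist (i : ℕ) (j : ℕ)) ∧
    x = ∑ i ∈ π, ∑ j ∈ π, (Cᵀ * C) i j })

/-- The Frobenius norm. -/
noncomputable def frob (n : ℕ) (C : Matrix (Fin n) (Fin n) ℝ) : ℝ :=
  Real.sqrt (∑ i : Fin n, ∑ j : Fin n, (C i j) ^ 2)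

section TransposeMulSelf

variable {m l : Type*} [Fintype m] (C : Matrix m l ℝ)

lemma sum_sum_transpose_mul_self_apply (s : Finset l) :
    ∑ i ∈ s, ∑ j ∈ s, (Cᵀ * C) i j = ∑ r, (∑ i ∈ s, C r i) ^ 2 := by
  simp only [mul_apply, transpose_apply, sq, sum_mul_sum]
  exact (sum_congr rfl fun _ _ => Finset.sum_comm).trans Finset.sum_comm

lemma sum_sum_transpose_mul_self_le_card_mul [Fintype l] (s : Finset l) :
    ∑ i ∈ s, ∑ j ∈ s, (Cᵀ * C) i j ≤ #s * ∑ r, ∑ i, C r i ^ 2 := by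
  rw [sum_sum_transpose_mul_self_apply, mul_sum]
  refine sum_le_sum fun r _ => sq_sum_le_card_mul_sum_sq.trans ?_
  exact mul_le_mul_of_nonneg_left
    (sum_le_sum_of_subset_of_nonneg (subset_univ s) fun i _ _ => sq_nonneg (C r i)) (by positivity)

lemma trace_transpose_mul_self [Fintype l] : trace (Cᵀ * C) = ∑ r, ∑ i, C r i ^ 2 := by
  simp only [trace, Matrix.diag, mul_apply, transpose_apply, sq]
  exact Finset.sum_comm

end TransposeMulSelf

lemma frob_sq (n : ℕ) (C : Matrix (Fin n) (Fin n) ℝ) : frob n C ^ 2 = ∑ i, ∑ j, C i j ^ 2 :=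
  Real.sq_sqrt (by positivity)

lemma le_dist_mod_mod_add {x d n b : ℕ} (hbd : b ≤ d) (hdn : d + b ≤ n) :
    b ≤ Nat.dist (x % n) ((x + d) % n) := by
  rcases Nat.eq_zero_or_pos b with rfl | hb
  · exact Nat.zero_le _
  have hx : x % n < n := Nat.mod_lt x (by omega)
  rw [Nat.add_mod, Nat.mod_eq_of_lt (by omega : d < n)]
  rcases lt_or_ge (x % n + d) n with h | h
  · rw [Nat.mod_eq_of_lt h, Nat.dist_eq_sub_of_le (by omega)]
    omega
  · rw [Nat.mod_eq_sub_mod h, Nat.mod_eq_of_lt (by omega : x % n + d - n < n),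
      Nat.dist_eq_sub_of_le_right (by omega : x % n + d - n ≤ x % n)]
    omega

section CyclicProgression

variable {n : ℕ} [NeZero n] {b k : ℕ}

lemma le_dist_add_ofNat_mul (hkb : k * b ≤ n) (a : Fin n) {t₁ t₂ : ℕ} (ht : t₁ < t₂)
    (ht₂ : t₂ < k) :
    b ≤ Nat.dist (a + Fin.ofNat n (t₁ * b) : Fin n) (a + Fin.ofNat n (t₂ * b) : Fin n) := by
  rcases Nat.eq_zero_or_pos b with rfl | hb
  · exact Nat.zero_le _
  obtain ⟨s, rfl⟩ := Nat.exists_eq_add_of_lt ht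
  have hle : (t₁ + s + 2) * b ≤ n := (Nat.mul_le_mul_right b (by omega)).trans hkb
  simp only [add_mul, one_mul] at hle ⊢
  simp only [Fin.val_add, Fin.val_ofNat, Nat.mod_eq_of_lt (by omega : t₁ * b < n),
    Nat.mod_eq_of_lt (by omega : t₁ * b + s * b + b < n)]
  rw [show (a : ℕ) + (t₁ * b + s * b + b) = a + t₁ * b + (s * b + b) by ring]
  exact le_dist_mod_mod_add (by omega) (by omega)

def cyclicProgression (n b k : ℕ) [NeZero n] (a : Fin n) : Finset (Fin n) :=
  (range k).image fun t => a + Fin.ofNat n (t * b)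

lemma card_cyclicProgression_le (a : Fin n) : #(cyclicProgression n b k a) ≤ k :=
  card_image_le.trans (card_range k).le

lemma cyclicProgression_separated (hkb : k * b ≤ n) (a : Fin n) :
    ∀ i ∈ cyclicProgression n b k a, ∀ j ∈ cyclicProgression n b k a, i ≠ j →
      b ≤ Nat.dist i j := by
  simp only [cyclicProgression, mem_image, mem_range]
  rintro _ ⟨t₁, ht₁, rfl⟩ _ ⟨t₂, ht₂, rfl⟩ hne
  rcases lt_trichotomy t₁ t₂ with h | rfl | h
  · exact le_dist_add_ofNat_mul hkb a h ht₂
  · exact absurd rfl hne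
  · rw [Nat.dist_comm]
    exact le_dist_add_ofNat_mul hkb a h ht₁

lemma add_ofNat_mul_injOn (hb : 0 < b) (hkb : k * b ≤ n) (a : Fin n) :
    Set.InjOn (fun t => a + Fin.ofNat n (t * b)) (range k) := by
  intro t₁ ht₁ t₂ ht₂ h
  dsimp only at h
  by_contra hne
  have hsep : b ≤ 0 := by
    rcases lt_or_gt_of_ne hne with hlt | hlt
    · simpa only [h, Nat.dist_self] using le_dist_add_ofNat_mul hkb a hlt (mem_range.1 ht₂)
    · simpa only [h, Nat.dist_self] using le_dist_add_ofNat_mul hkb a hlt (mem_range.1 ht₁)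
  omega

lemma sum_sum_cyclicProgression {M : Type*} [AddCommMonoid M] (hb : 0 < b) (hkb : k * b ≤ n)
    (g : Fin n → M) : ∑ a, ∑ i ∈ cyclicProgression n b k a, g i = k • ∑ i, g i := by
  calc ∑ a, ∑ i ∈ cyclicProgression n b k a, g i
      = ∑ a, ∑ t ∈ range k, g (a + Fin.ofNat n (t * b)) :=
        sum_congr rfl fun a _ => sum_image (add_ofNat_mul_injOn hb hkb a)
    _ = ∑ t ∈ range k, ∑ a, g (a + Fin.ofNat n (t * b)) := Finset.sum_comm
    _ = ∑ t ∈ range k, ∑ i, g i :=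
        sum_congr rfl fun t _ =>
          Fintype.sum_equiv (Equiv.addRight (Fin.ofNat n (t * b))) _ _ fun _ => rfl
    _ = k • ∑ i, g i := by rw [sum_const, card_range]

end CyclicProgression

section Sensitivity

variable (n b k : ℕ) (C : Matrix (Fin n) (Fin n) ℝ)

-- The set whose supremum is under the square root in `sens`.
def sensSet : Set ℝ :=
  { x : ℝ | ∃ π : Finset (Fin n), π.card ≤ k ∧
    (∀ i ∈ π, ∀ j ∈ π, i ≠ j → b ≤ Nat.dist (i : ℕ) (j : ℕ)) ∧
    x = ∑ i ∈ π, ∑ j ∈ π, (Cᵀ * C) i j }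

lemma le_of_mem_sensSet {x : ℝ} (hx : x ∈ sensSet n b k C) : x ≤ k * frob n C ^ 2 := by
  obtain ⟨π, hcard, -, rfl⟩ := hx
  calc ∑ i ∈ π, ∑ j ∈ π, (Cᵀ * C) i j ≤ #π * ∑ r, ∑ i, C r i ^ 2 :=
        sum_sum_transpose_mul_self_le_card_mul C π
    _ ≤ k * frob n C ^ 2 := by
        rw [frob_sq]
        gcongr

lemma sq_sens_eq_sSup : sens n b k C ^ 2 = sSup (sensSet n b k C) := by
  have hzero : (0 : ℝ) ∈ sensSet n b k C := ⟨∅, by simp⟩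
  exact Real.sq_sqrt (le_csSup ⟨_, fun _ => le_of_mem_sensSet n b k C⟩ hzero)

lemma sq_sens_le_mul_sq_frob : sens n b k C ^ 2 ≤ k * frob n C ^ 2 := by
  rw [sq_sens_eq_sSup]
  exact csSup_le ⟨0, ∅, by simp⟩ fun _ => le_of_mem_sensSet n b k C

variable {n b k}

lemma sum_sum_le_sq_sens (π : Finset (Fin n)) (hcard : #π ≤ k)
    (hsep : ∀ i ∈ π, ∀ j ∈ π, i ≠ j → b ≤ Nat.dist (i : ℕ) (j : ℕ)) :
    ∑ i ∈ π, ∑ j ∈ π, (Cᵀ * C) i j ≤ sens n b k C ^ 2 := by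
  rw [sq_sens_eq_sSup]
  exact le_csSup ⟨_, fun _ => le_of_mem_sensSet n b k C⟩ ⟨π, hcard, hsep, rfl⟩

lemma mul_sq_frob_le_mul_sq_sens (hb : 0 < b) (hkb : k * b ≤ n)
    (hC : ∀ i j, 0 ≤ (Cᵀ * C) i j) : k * frob n C ^ 2 ≤ n * sens n b k C ^ 2 := by
  rcases Nat.eq_zero_or_pos n with rfl | hn
  · simp [frob]
  have : NeZero n := NeZero.of_pos hn
  calc (k : ℝ) * frob n C ^ 2 = ∑ a, ∑ i ∈ cyclicProgression n b k a, (Cᵀ * C) i i := by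
        rw [sum_sum_cyclicProgression hb hkb, frob_sq, ← trace_transpose_mul_self, nsmul_eq_mul]
        rfl
    _ ≤ ∑ _a : Fin n, sens n b k C ^ 2 := by
        refine sum_le_sum fun a _ => le_trans ?_ (sum_sum_le_sq_sens C _
          (card_cyclicProgression_le a) (cyclicProgression_separated hkb a))
        exact sum_le_sum fun i hi => single_le_sum (fun j _ => hC i j) hi
    _ = n * sens n b k C ^ 2 := by simp

end Sensitivity

theorem sens_frobenius_bounds_general (n b k : ℕ) (hb : 1 ≤ b)
    (hkn : k ≤ n / b)
    (C : Matrix (Fin n) (Fin n) ℝ) (hC : ∀ i j, 0 ≤ (Cᵀ * C) i j) :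
    ((k : ℝ) / n) * frob n C ^ 2 ≤ sens n b k C ^ 2 ∧
      sens n b k C ^ 2 ≤ (k : ℝ) * frob n C ^ 2 := by
  have hkb : k * b ≤ n := (Nat.mul_le_mul_right b hkn).trans (Nat.div_mul_le_self n b)
  refine ⟨?_, sq_sens_le_mul_sq_frob n b k C⟩
  rw [div_mul_eq_mul_div]
  exact div_le_of_le_mul₀ n.cast_nonneg (sq_nonneg _)
    (by linarith [mul_sq_frob_le_mul_sq_sens C hb hkb hC])

/-- `(k/n)·‖C‖_F² ≤ sens_{k,b}(C)² ≤ k·‖C‖_F²`. -/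
theorem sens_frobenius_bounds (n b k : ℕ) (hn : 1 ≤ n) (hb : 1 ≤ b) (hk : 1 ≤ k)
    (hdvd : b ∣ n) (hkn : k ≤ n / b)
    (C : Matrix (Fin n) (Fin n) ℝ) (hC : ∀ i j, 0 ≤ (Cᵀ * C) i j) :
    ((k : ℝ) / n) * frob n C ^ 2 ≤ sens n b k C ^ 2 ∧
      sens n b k C ^ 2 ≤ (k : ℝ) * frob n C ^ 2 :=
  sens_frobenius_bounds_general n b k hb hkn C hC
end

section
/- Let n ≥ 1 and 0 ≤ t ≤ 1, and let T be the n×n real symmetric tridiagonal matrix with T[0,0] = 1, T[i,i] = 1 + t² for 1 ≤ i ≤ n−1, T[i,i+1] = T[i+1,i] = −t for 0 ≤ i ≤ n−2, and all other entries 0. If μ ∈ ℝ and x ∈ ℝ^n with x ≠ 0 satisfy T·x = μ·x, then (1 − t)² ≤ μ ≤ (1 + t)². -/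
/-!
With `S` the shift `(S x)ᵢ = xᵢ₊₁` (and `xₙ = 0`), `T = Uᵀ U` for `U = 1 - t S`, so
`xᵀ T x = ‖x - t S x‖²`. Since `S` only drops a coordinate, `‖S x‖ ≤ ‖x‖`, and the triangle
inequality gives `(1 - t) ‖x‖ ≤ ‖x - t S x‖ ≤ (1 + t) ‖x‖`; for an eigenvector the middle
term squared is `μ ‖x‖²`.
-/

open Finset Matrix

/-- The symmetric tridiagonal matrix `T = E_t⁻¹ (E_t⁻¹)ᵀ`:
`T[0,0] = 1`, `T[i,i] = 1 + t²` for `i ≥ 1`, `T[i,i±1] = −t`, all other entries `0`. -/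
noncomputable def Tmat (n : ℕ) (t : ℝ) : Matrix (Fin n) (Fin n) ℝ :=
  Matrix.of fun i j =>
    if i = j then (if (i : ℕ) = 0 then 1 else 1 + t ^ 2)
    else if Nat.dist (i : ℕ) (j : ℕ) = 1 then -t else 0

def shiftMat (R : Type*) [Zero R] [One R] (n : ℕ) : Matrix (Fin n) (Fin n) R :=
  of fun i j => if (j : ℕ) = i + 1 then 1 else 0

lemma shiftMat_transpose_mul_self (R : Type*) [NonAssocSemiring R] (n : ℕ) :
    (shiftMat R n)ᵀ * shiftMat R n = diagonal fun i : Fin n => if (i : ℕ) = 0 then 0 else 1 := by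
  ext i j
  simp only [mul_apply, transpose_apply, shiftMat, of_apply, diagonal_apply, mul_ite, mul_one,
    mul_zero]
  by_cases h : i = j ∧ (i : ℕ) ≠ 0
  · obtain ⟨rfl, hi⟩ := h
    rw [sum_eq_single ⟨i - 1, by omega⟩ fun k _ hk => by grind, if_pos rfl, if_neg hi]
    · grind
    · simp
  · rw [sum_eq_zero fun k _ => by grind]
    grind

lemma Nat.dist_eq_one_iff {i j : ℕ} : Nat.dist i j = 1 ↔ i = j + 1 ∨ j = i + 1 := by
  unfold Nat.dist
  omega

lemma Tmat_eq_transpose_mul_self (n : ℕ) (t : ℝ) :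
    Tmat n t = (1 - t • shiftMat ℝ n)ᵀ * (1 - t • shiftMat ℝ n) := by
  simp only [transpose_sub, transpose_one, transpose_smul, sub_mul, mul_sub, one_mul, mul_one,
    smul_mul_smul, shiftMat_transpose_mul_self]
  ext i j
  simp only [Tmat, shiftMat, of_apply, Matrix.sub_apply, Matrix.smul_apply, one_apply,
    transpose_apply, diagonal_apply, Fin.ext_iff, smul_eq_mul, Nat.dist_eq_one_iff]
  split_ifs <;> first | omega | ring

lemma dotProduct_shiftMat_mulVec_self_le {R : Type*} [CommRing R] [LinearOrder R]
    [IsStrictOrderedRing R] {n : ℕ} (x : Fin n → R) :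
    (shiftMat R n *ᵥ x) ⬝ᵥ (shiftMat R n *ᵥ x) ≤ x ⬝ᵥ x := by
  rw [dotProduct_mulVec, ← vecMul_transpose, vecMul_vecMul, ← dotProduct_mulVec,
    shiftMat_transpose_mul_self]
  simp only [dotProduct, mulVec_diagonal]
  refine sum_le_sum fun i _ => ?_
  split_ifs <;> nlinarith [mul_self_nonneg (x i)]

lemma dotProduct_self_eq_norm_sq {ι : Type*} [Fintype ι] (x : ι → ℝ) :
    x ⬝ᵥ x = ‖WithLp.toLp 2 x‖ ^ 2 := by
  rw [← real_inner_self_eq_norm_sq, EuclideanSpace.inner_toLp_toLp, star_trivial]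

lemma dotProduct_Tmat_mulVec {n : ℕ} (t : ℝ) (x : Fin n → ℝ) :
    x ⬝ᵥ (Tmat n t *ᵥ x) =
      ‖WithLp.toLp 2 x - t • WithLp.toLp 2 (shiftMat ℝ n *ᵥ x)‖ ^ 2 := by
  rw [Tmat_eq_transpose_mul_self, ← mulVec_mulVec, dotProduct_mulVec, vecMul_transpose,
    ← WithLp.toLp_smul, ← WithLp.toLp_sub, ← dotProduct_self_eq_norm_sq, sub_mulVec, one_mulVec,
    smul_mulVec]

lemma norm_sub_smul_mem_Icc {E : Type*} [SeminormedAddCommGroup E] [NormedSpace ℝ E]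
    {v w : E} (hwv : ‖w‖ ≤ ‖v‖) {t : ℝ} (ht : 0 ≤ t) :
    (1 - t) * ‖v‖ ≤ ‖v - t • w‖ ∧ ‖v - t • w‖ ≤ (1 + t) * ‖v‖ := by
  have htw : ‖t • w‖ ≤ t * ‖v‖ := by
    rw [norm_smul, Real.norm_of_nonneg ht]
    exact mul_le_mul_of_nonneg_left hwv ht
  constructor
  · linarith [norm_sub_norm_le v (t • w)]
  · linarith [norm_sub_le v (t • w)]

theorem Tmat_eigenvalue_bounds_general (n : ℕ) (t : ℝ) (ht0 : 0 ≤ t) (ht1 : t ≤ 1)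
    (μ : ℝ) (x : Fin n → ℝ) (hx : x ≠ 0) (heig : (Tmat n t).mulVec x = μ • x) :
    (1 - t) ^ 2 ≤ μ ∧ μ ≤ (1 + t) ^ 2 := by
  set v := WithLp.toLp 2 x
  set w := WithLp.toLp 2 (shiftMat ℝ n *ᵥ x)
  have hμ : μ * ‖v‖ ^ 2 = ‖v - t • w‖ ^ 2 := by
    rw [← dotProduct_Tmat_mulVec, heig, dotProduct_smul, smul_eq_mul, dotProduct_self_eq_norm_sq]
  have hwv : ‖w‖ ≤ ‖v‖ := by
    rw [← sq_le_sq₀ (norm_nonneg _) (norm_nonneg _), ← dotProduct_self_eq_norm_sq,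
      ← dotProduct_self_eq_norm_sq]
    exact dotProduct_shiftMat_mulVec_self_le x
  have hv : 0 < ‖v‖ := norm_pos_iff.mpr fun h => hx (congrArg WithLp.ofLp h)
  obtain ⟨hlo, hhi⟩ := norm_sub_smul_mem_Icc hwv ht0
  constructor
  · refine le_of_mul_le_mul_right ?_ (pow_pos hv 2)
    rw [hμ, ← mul_pow]
    exact pow_le_pow_left₀ (mul_nonneg (sub_nonneg.mpr ht1) hv.le) hlo 2
  · refine le_of_mul_le_mul_right ?_ (pow_pos hv 2)
    rw [hμ, ← mul_pow]
    exact pow_le_pow_left₀ (norm_nonneg _) hhi 2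

/-- every eigenvalue `μ` of `T` satisfies `(1 − t)² ≤ μ ≤ (1 + t)²`. -/
theorem Tmat_eigenvalue_bounds (n : ℕ) (hn : 1 ≤ n) (t : ℝ) (ht0 : 0 ≤ t) (ht1 : t ≤ 1)
    (μ : ℝ) (x : Fin n → ℝ) (hx : x ≠ 0) (heig : (Tmat n t).mulVec x = μ • x) :
    (1 - t) ^ 2 ≤ μ ∧ μ ≤ (1 + t) ^ 2 :=
  Tmat_eigenvalue_bounds_general n t ht0 ht1 μ x hx heig
end

section
/- Let n ≥ 1 and 0 ≤ β < α ≤ 1, and consider single participation (k = 1, b = n). Then (1/n) · Σ_{j=0}^{n−1} Σ_{i=0}^{n−1−j} c_i² ≤ (1/√n) · sens_{1,n}(C_{α,β}) · ‖C_{α,β}‖_F ≤ Σ_{i=0}^{n−1} c_i². -/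
open Finset Matrix

/-!
With a single participation the sensitivity is the largest column norm of `C`. Column `j` of
the lower triangular Toeplitz matrix `C_{α,β}` has squared norm `Σ_{i<n-j} c_i²`, so the first
column is the largest, with `S = Σ_{i<n} c_i²`, and `‖C_{α,β}‖_F² = T := Σ_j Σ_{i<n-j} c_i² ≤ n S`.
The middle term is `√S · √(T/n)`, and both bounds are `x ≤ √S √x ≤ S` for `x = T/n ∈ [0, S]`.
-/

lemma sum_fin_ite_le_eq_sum_range {n : ℕ} (f : ℕ → ℝ) (a : Fin n) :
    ∑ k : Fin n, (if (a : ℕ) ≤ k then f (k - a) else 0) = ∑ i ∈ range (n - a), f i := by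
  rw [Fin.sum_univ_eq_sum_range (fun k => if (a : ℕ) ≤ k then f (k - a) else 0), ← sum_filter,
    range_eq_Ico, Ico_filter_le_of_left_le (Nat.zero_le _), sum_Ico_eq_sum_range]
  simp only [Nat.add_sub_cancel_left]

lemma sum_range_sq_le_of_le (f : ℕ → ℝ) {m n : ℕ} (h : m ≤ n) :
    ∑ i ∈ range m, f i ^ 2 ≤ ∑ i ∈ range n, f i ^ 2 :=
  sum_le_sum_of_subset_of_nonneg (range_subset_range.mpr h) fun _ _ _ => sq_nonneg _

lemma transpose_mul_self_apply_self {m n : Type*} [Fintype m] (A : Matrix m n ℝ) (a : n) :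
    (Aᵀ * A) a a = ∑ k, A k a ^ 2 := by
  simp only [mul_apply, transpose_apply, sq]

lemma sens_one_eq_sqrt_sSup_diag (n b : ℕ) (C : Matrix (Fin n) (Fin n) ℝ) :
    sens n b 1 C = √(sSup (insert 0 (Set.range fun a => (Cᵀ * C) a a))) := by
  unfold sens
  congr 2
  ext x
  constructor
  · rintro ⟨π, hcard, -, rfl⟩
    rcases Nat.le_one_iff_eq_zero_or_eq_one.mp hcard with hπ | hπ
    · simp [card_eq_zero.mp hπ]
    · obtain ⟨a, rfl⟩ := card_eq_one.mp hπ
      simp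
  · rintro (rfl | ⟨a, rfl⟩)
    · exact ⟨∅, by simp, by simp, by simp⟩
    · exact ⟨{a}, by simp, by simp, by simp⟩

lemma Cmat_col_sq_sum (n : ℕ) (α β : ℝ) (a : Fin n) :
    ∑ k, Cmat n α β k a ^ 2 = ∑ i ∈ range (n - a), cCoef α β i ^ 2 := by
  rw [← sum_fin_ite_le_eq_sum_range]
  refine sum_congr rfl fun k _ => ?_
  simp only [Cmat, of_apply]
  split_ifs <;> simp

lemma sens_one_Cmat (n b : ℕ) (α β : ℝ) :
    sens n b 1 (Cmat n α β) = √(∑ i ∈ range n, cCoef α β i ^ 2) := by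
  rw [sens_one_eq_sqrt_sSup_diag]
  congr 1
  refine IsGreatest.csSup_eq ⟨?_, ?_⟩
  · rcases Nat.eq_zero_or_pos n with rfl | hn
    · simp
    · refine Set.mem_insert_of_mem _ ⟨⟨0, hn⟩, ?_⟩
      simp [transpose_mul_self_apply_self, Cmat_col_sq_sum]
  · rintro x (rfl | ⟨a, rfl⟩)
    · positivity
    · dsimp only
      rw [transpose_mul_self_apply_self, Cmat_col_sq_sum]
      exact sum_range_sq_le_of_le _ (Nat.sub_le _ _)

lemma frob_Cmat (n : ℕ) (α β : ℝ) :
    frob n (Cmat n α β) = √(∑ j ∈ range n, ∑ i ∈ range (n - j), cCoef α β i ^ 2) := by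
  rw [frob, sum_comm]
  simp only [Cmat_col_sq_sum]
  rw [Fin.sum_univ_eq_sum_range (fun j => ∑ i ∈ range (n - j), cCoef α β i ^ 2)]

lemma le_sqrt_mul_sqrt_le {x s : ℝ} (hx : 0 ≤ x) (hxs : x ≤ s) :
    x ≤ √s * √x ∧ √s * √x ≤ s := by
  have hsx : √x ≤ √s := Real.sqrt_le_sqrt hxs
  constructor
  · calc x = √x * √x := (Real.mul_self_sqrt hx).symm
      _ ≤ √s * √x := by gcongr
  · calc √s * √x ≤ √s * √s := by gcongr
      _ = s := Real.mul_self_sqrt (hx.trans hxs)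

theorem error_sandwich_single_participation_general (n : ℕ) (α β : ℝ) :
    (1 / (n : ℝ)) * ∑ j ∈ Finset.range n, ∑ i ∈ Finset.range (n - j), cCoef α β i ^ 2 ≤
        (1 / Real.sqrt n) * sens n n 1 (Cmat n α β) * frob n (Cmat n α β) ∧
      (1 / Real.sqrt n) * sens n n 1 (Cmat n α β) * frob n (Cmat n α β) ≤
        ∑ i ∈ Finset.range n, cCoef α β i ^ 2 := by
  set S := ∑ i ∈ range n, cCoef α β i ^ 2
  set T := ∑ j ∈ range n, ∑ i ∈ range (n - j), cCoef α β i ^ 2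
  have hTS : T ≤ S * n := by
    calc T ≤ ∑ _j ∈ range n, S :=
          sum_le_sum fun _ _ => sum_range_sq_le_of_le _ (Nat.sub_le _ _)
      _ = S * n := by rw [sum_const, card_range, nsmul_eq_mul, mul_comm]
  have hmid : (1 / √n) * sens n n 1 (Cmat n α β) * frob n (Cmat n α β) = √S * √(T / n) := by
    rw [sens_one_Cmat, frob_Cmat, Real.sqrt_div' _ n.cast_nonneg]
    ring
  rw [hmid, one_div_mul_eq_div]
  exact le_sqrt_mul_sqrt_le (by positivity) (div_le_of_le_mul₀ n.cast_nonneg (by positivity) hTS)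

/-- in the single participation setting (`k = 1`, `b = n`),
`(1/n)·Σ_{j=0}^{n−1} Σ_{i=0}^{n−1−j} c_i² ≤ (1/√n)·sens_{1,n}(C_{α,β})·‖C_{α,β}‖_F
≤ Σ_{i=0}^{n−1} c_i²`. -/
theorem error_sandwich_single_participation (n : ℕ) (hn : 1 ≤ n) (α β : ℝ)
    (hβ : 0 ≤ β) (hβα : β < α) (hα : α ≤ 1) :
    (1 / (n : ℝ)) * ∑ j ∈ Finset.range n, ∑ i ∈ Finset.range (n - j), cCoef α β i ^ 2 ≤
        (1 / Real.sqrt n) * sens n n 1 (Cmat n α β) * frob n (Cmat n α β) ∧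
      (1 / Real.sqrt n) * sens n n 1 (Cmat n α β) * frob n (Cmat n α β) ≤
        ∑ i ∈ Finset.range n, cCoef α β i ^ 2 :=
  error_sandwich_single_participation_general n α β
end

section
/- Let p ≥ 1 be an integer and let (c_m)_{m≥0} be any real sequence with c_0 = 1. Define the truncated sequence c^{(p)}_m = c_m for 0 ≤ m < p and c^{(p)}_m = 0 for m ≥ p. Suppose a real sequence (b_m)_{m≥0} satisfies the convolution identity Σ_{i=0}^{m} b_{m−i} · c^{(p)}_i = Σ_{i=0}^{m} c_i · c_{m−i} for every m with 0 ≤ m ≤ 2p−1. Then b_m = c_m for 0 ≤ m < p, and b_m = 2·c_m for p ≤ m ≤ 2p−1. -/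
open Finset

lemma key_sum (c : ℕ → ℝ) (hc0 : c 0 = 1) (q k : ℕ) (hk : k ≤ q) :
    ∑ i ∈ Finset.range (q + k + 1 + 1), c i * c (q + k + 1 - i)
      = 2 * c (q + k + 1)
        + ∑ i ∈ Finset.range q,
            (if k ≤ i then c (q + k - i) else 2 * c (q + k - i)) * c (i + 1) := by
  rw [Finset.sum_range_succ, Finset.sum_range_succ']
  have e1 : ∀ i ∈ Finset.range (q + k),
      c (i + 1) * c (q + k + 1 - (i + 1)) = c (i + 1) * c (q + k - i) := by
    intro i hi; congr 2; omega
  rw [Finset.sum_congr rfl e1]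
  simp only [Nat.sub_zero, Nat.sub_self, hc0, mul_one, one_mul]
  have split1 : ∑ i ∈ Finset.range (q + k), c (i + 1) * c (q + k - i)
      = ∑ i ∈ Finset.range q, c (i + 1) * c (q + k - i)
        + ∑ i ∈ Finset.Ico q (q + k), c (i + 1) * c (q + k - i) :=
    (Finset.sum_range_add_sum_Ico _ (by omega)).symm
  have refl1 : ∑ i ∈ Finset.Ico q (q + k), c (i + 1) * c (q + k - i)
      = ∑ i ∈ Finset.range k, c (q + k - i) * c (i + 1) := by
    rw [Finset.sum_Ico_eq_sum_range, show q + k - q = k from by omega,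
      ← Finset.sum_range_reflect (fun i => c (q + k - i) * c (i + 1)) k]
    refine Finset.sum_congr rfl fun i hi => ?_
    have hik := Finset.mem_range.mp hi
    have h1 : q + i + 1 = q + k - (k - 1 - i) := by omega
    have h2 : q + k - (q + i) = k - 1 - i + 1 := by omega
    rw [h1, h2]
  have splitT : ∑ i ∈ Finset.range q,
      (if k ≤ i then c (q + k - i) else 2 * c (q + k - i)) * c (i + 1)
      = ∑ i ∈ Finset.range k, 2 * c (q + k - i) * c (i + 1)
        + ∑ i ∈ Finset.Ico k q, c (q + k - i) * c (i + 1) := by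
    rw [← Finset.sum_range_add_sum_Ico _ hk]
    congr 1
    · exact Finset.sum_congr rfl fun i hi => by
        rw [if_neg (by have := Finset.mem_range.mp hi; omega)]
    · exact Finset.sum_congr rfl fun i hi => by
        rw [if_pos (Finset.mem_Ico.mp hi).1]
  have split2 : ∑ i ∈ Finset.range q, c (i + 1) * c (q + k - i)
      = ∑ i ∈ Finset.range k, c (i + 1) * c (q + k - i)
        + ∑ i ∈ Finset.Ico k q, c (i + 1) * c (q + k - i) :=
    (Finset.sum_range_add_sum_Ico _ hk).symm
  have comm1 : ∑ i ∈ Finset.range k, c (q + k - i) * c (i + 1)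
      = ∑ i ∈ Finset.range k, c (i + 1) * c (q + k - i) :=
    Finset.sum_congr rfl fun i _ => mul_comm _ _
  have comm2 : ∑ i ∈ Finset.Ico k q, c (q + k - i) * c (i + 1)
      = ∑ i ∈ Finset.Ico k q, c (i + 1) * c (q + k - i) :=
    Finset.sum_congr rfl fun i _ => mul_comm _ _
  have comm3 : ∑ i ∈ Finset.range k, 2 * c (q + k - i) * c (i + 1)
      = 2 * ∑ i ∈ Finset.range k, c (i + 1) * c (q + k - i) := by
    rw [Finset.mul_sum]; exact Finset.sum_congr rfl fun i _ => by ring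
  linarith [split1, refl1, splitT, split2, comm1, comm2, comm3]

/-- if `(b_m)` satisfies the convolution identity
`Σ_{i=0}^{m} b_{m−i}·c^{(p)}_i = Σ_{i=0}^{m} c_i·c_{m−i}` for `0 ≤ m ≤ 2p−1`,
where `c^{(p)}` is the truncation of `c` to indices `< p` and `c_0 = 1`,
then `b_m = c_m` for `m < p` and `b_m = 2·c_m` for `p ≤ m ≤ 2p−1`. -/
theorem banded_factor_coefficients (p : ℕ) (hp : 1 ≤ p) (c b : ℕ → ℝ) (hc0 : c 0 = 1)
    (hconv : ∀ m : ℕ, m ≤ 2 * p - 1 →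
      ∑ i ∈ Finset.range (m + 1), b (m - i) * (if i < p then c i else 0) =
        ∑ i ∈ Finset.range (m + 1), c i * c (m - i)) :
    (∀ m : ℕ, m < p → b m = c m) ∧
      (∀ m : ℕ, p ≤ m → m ≤ 2 * p - 1 → b m = 2 * c m) := by
  obtain ⟨q, rfl⟩ : ∃ q, p = q + 1 := ⟨p - 1, by omega⟩
  suffices H : ∀ m, (m < q + 1 → b m = c m) ∧
      (q + 1 ≤ m → m ≤ 2 * (q + 1) - 1 → b m = 2 * c m) from
    ⟨fun m hm => (H m).1 hm, fun m h1 h2 => (H m).2 h1 h2⟩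
  intro m
  induction m using Nat.strong_induction_on with
  | _ m IH =>
  constructor
  · intro hm
    have h := hconv m (by omega)
    rw [Finset.sum_range_succ', Finset.sum_range_succ'] at h
    have e : ∀ i ∈ Finset.range m, b (m - (i + 1)) * (if i + 1 < q + 1 then c (i + 1) else 0)
        = c (i + 1) * c (m - (i + 1)) := by
      intro i hi
      have hi' := Finset.mem_range.mp hi
      rw [if_pos (by omega), (IH (m - (i + 1)) (by omega)).1 (by omega), mul_comm]
    rw [Finset.sum_congr rfl e] at h
    have h0 : (0 : ℕ) < q + 1 := by omega
    simp only [Nat.sub_zero, if_pos h0, hc0, mul_one, one_mul] at h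
    linarith
  · intro hpm hm2
    obtain ⟨k, rfl⟩ : ∃ k, m = q + k + 1 := ⟨m - (q + 1), by omega⟩
    have hk : k ≤ q := by omega
    have h := hconv (q + k + 1) (by omega)
    have hL : ∑ i ∈ Finset.range (q + k + 1 + 1),
          b (q + k + 1 - i) * (if i < q + 1 then c i else 0)
        = ∑ i ∈ Finset.range (q + 1), b (q + k + 1 - i) * c i := by
      rw [← Finset.sum_range_add_sum_Ico _ (show q + 1 ≤ q + k + 1 + 1 by omega)]
      have hz : ∑ i ∈ Finset.Ico (q + 1) (q + k + 1 + 1),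
          b (q + k + 1 - i) * (if i < q + 1 then c i else 0) = 0 :=
        Finset.sum_eq_zero fun i hi => by
          rw [if_neg (by have := (Finset.mem_Ico.mp hi).1; omega), mul_zero]
      rw [hz, add_zero]
      exact Finset.sum_congr rfl fun i hi => by
        rw [if_pos (Finset.mem_range.mp hi)]
    rw [hL, Finset.sum_range_succ'] at h
    have e : ∀ i ∈ Finset.range q, b (q + k + 1 - (i + 1)) * c (i + 1)
        = (if k ≤ i then c (q + k - i) else 2 * c (q + k - i)) * c (i + 1) := by
      intro i hi
      have hi' := Finset.mem_range.mp hi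
      have hidx : q + k + 1 - (i + 1) = q + k - i := by omega
      rw [hidx]
      by_cases hcase : k ≤ i
      · rw [if_pos hcase, (IH (q + k - i) (by omega)).1 (by omega)]
      · rw [if_neg hcase, (IH (q + k - i) (by omega)).2 (by omega) (by omega)]
    rw [Finset.sum_congr rfl e] at h
    simp only [Nat.sub_zero, hc0, mul_one] at h
    linarith [key_sum c hc0 q k hk, h]
end
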